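/- arXiv:2111.08586 — 3 statements merged into one kernel-verified Lean document; each statement's English description precedes it below -/
import Mathlib

section
/- Let V_D be the 𝔽_2-vector space with basis {e_i : i ∈ [1,D]}, and for an interval I ⊆ [1,D] let e_I = Σ_{i∈I} e_i. Then for any B ∈ 𝕊_D (the inductively defined family of 'admissible' interval sets), the vectors {e_I : I ∈ B} are linearly independent in V_D. -/
open Finset

abbrev Vec := ℕ →₀ ZMod 2

/-- The basis vector `e_i`. -/
noncomputable def e (i : ℕ) : Vec := Finsupp.single i 1

/-- For an interval `p = (a,b)` (representing `[a,b]`), the vector `e_I = ∑_{i∈[a,b]} e_i`. -/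
noncomputable def eI (p : ℕ × ℕ) : Vec := ∑ j ∈ Finset.Icc p.1 p.2, e j

/-- The map `ξ_i` on intervals. -/
def tint (i : ℕ) (p : ℕ × ℕ) : ℕ × ℕ :=
  if i ≤ p.1 then (p.1 + 2, p.2 + 2)
  else if p.2 + 2 ≤ i then p
  else (p.1, p.2 + 2)

/-- The map `t_i` on sets of intervals: `t_i(B') = ξ_i(B') ∪ {[i,i]}`. -/
def tmap (i : ℕ) (B : Finset (ℕ × ℕ)) : Finset (ℕ × ℕ) :=
  B.image (tint i) ∪ {(i, i)}

/-- The inductively defined family `S_D`. -/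
inductive IsS : ℕ → Finset (ℕ × ℕ) → Prop
  | empty (D : ℕ) : IsS D ∅
  | one : IsS 1 {(1, 1)}
  | step (D i : ℕ) (B' : Finset (ℕ × ℕ)) (h1 : 1 ≤ i) (h2 : i ≤ D + 2)
      (h : IsS D B') : IsS (D + 2) (tmap i B')

def primEven (D k : ℕ) : Finset (ℕ × ℕ) := (Finset.Icc 1 k).image fun j => (j, D + 1 - j)
def primOddA (D k : ℕ) : Finset (ℕ × ℕ) := (Finset.Icc 1 k).image fun j => (j, D - j)
def primOddB (D k : ℕ) : Finset (ℕ × ℕ) := (Finset.Icc 1 k).image fun j => (j + 1, D + 1 - j)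

/-- The primitive elements of `𝕊_D`. -/
def IsPrim (D : ℕ) (B : Finset (ℕ × ℕ)) : Prop :=
  B = ∅ ∨
  (Even D ∧ ∃ k, 1 ≤ k ∧ k ≤ D / 2 ∧ B = primEven D k) ∨
  (Odd D ∧ ∃ k, Odd k ∧ 1 ≤ k ∧ k ≤ (D - 1) / 2 ∧ (B = primOddA D k ∨ B = primOddB D k))

/-- The inductively defined family `𝕊_D`. -/
inductive IsSS : ℕ → Finset (ℕ × ℕ) → Prop
  | prim (D : ℕ) (B : Finset (ℕ × ℕ)) : IsPrim D B → IsSS D B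
  | one : IsSS 1 {(1, 1)}
  | step (D i : ℕ) (B' : Finset (ℕ × ℕ)) (h1 : 1 ≤ i) (h2 : i ≤ D + 2)
      (h : IsSS D B') : IsSS (D + 2) (tmap i B')

/-- The subspace `𝔼_B` spanned by the `e_I`, `I ∈ B`. -/
noncomputable def EB (B : Finset (ℕ × ℕ)) : Submodule (ZMod 2) Vec :=
  Submodule.span (ZMod 2) (eI '' (B : Set (ℕ × ℕ)))

/-- Two intervals are non-touching. -/
def Nontouch (p q : ℕ × ℕ) : Prop := p.2 + 2 ≤ q.1 ∨ q.2 + 2 ≤ p.1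

/-- `p ≺ q`: `p = [a,b]` is strictly nested inside `q = [a',b']`, i.e. `a' < a ≤ b < b'`. -/
def Nested (p q : ℕ × ℕ) : Prop := q.1 < p.1 ∧ p.1 ≤ p.2 ∧ p.2 < q.2

/-- `η_D = e_1 + e_3 + ⋯ + e_D` (`D` odd). -/
noncomputable def eta (D : ℕ) : Vec := ∑ j ∈ (Finset.Icc 1 D).filter (fun j => j % 2 = 1), e j

noncomputable def Tfun (i k : ℕ) : Vec :=
  if k + 1 < i then e k
  else if k + 1 = i then e k + e (k + 1) + e (k + 2)
  else e (k + 2)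

/-- The linear map `T_i : V_{D-2} → V_D`. -/
noncomputable def Tlin (i : ℕ) : Vec →ₗ[ZMod 2] Vec :=
  Finsupp.linearCombination (ZMod 2) (Tfun i)

/-- The inductively defined family `𝒻(V_D)` of subspaces. -/
inductive IsF : ℕ → Submodule (ZMod 2) Vec → Prop
  | zero (D : ℕ) : IsF D ⊥
  | one : IsF 1 (Submodule.span (ZMod 2) {e 1})
  | step (D i : ℕ) (E' : Submodule (ZMod 2) Vec) (h1 : 1 ≤ i) (h2 : i ≤ D + 2)
      (h : IsF D E') :
      IsF (D + 2) (Submodule.map (Tlin i) E' ⊔ Submodule.span (ZMod 2) {e i})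

/-- The subspace `V_D = ⟨e_1,…,e_D⟩`. -/
noncomputable def VD (D : ℕ) : Submodule (ZMod 2) Vec :=
  Submodule.span (ZMod 2) (e '' Set.Icc 1 D)

/-- The symplectic form with `(e_i,e_j) = 1` iff `|i-j| = 1`. -/
noncomputable def symp (x y : Vec) : ZMod 2 :=
  x.sum fun i xi => xi * (y (i + 1) + if 1 ≤ i then y (i - 1) else 0)

/-!
Every interval of an admissible `B` is nonempty, and distinct intervals of `B` have distinct left
endpoints: `ξ_i` moves left endpoints by the injective map `a ↦ if i ≤ a then a + 2 else a`, whose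
image misses `i`. Listing `B` by left endpoint, the coordinates of the `e_I` at those endpoints form
a unitriangular matrix.
-/

theorem linearIndependent_of_injective_leading {ι α K : Type*} [LinearOrder α] [Field K]
    {v : ι → α →₀ K} (a : ι → α) (ha : Function.Injective a) (hlead : ∀ i, v i (a i) ≠ 0)
    (hbelow : ∀ i m, m < a i → v i m = 0) : LinearIndependent K v := by
  classical
  rw [linearIndependent_iff']
  intro s g hsum
  by_contra! hne
  obtain ⟨i, his, hgi⟩ := hne
  obtain ⟨j, hj, hjmin⟩ :=
    Finset.exists_min_image {i ∈ s | g i ≠ 0} a ⟨i, Finset.mem_filter.2 ⟨his, hgi⟩⟩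
  rw [Finset.mem_filter] at hj
  have hcoord : ∑ k ∈ s, g k * v k (a j) = g j * v j (a j) := by
    refine Finset.sum_eq_single j (fun k hks hkj => ?_) (fun h => absurd hj.1 h)
    by_cases hgk : g k = 0
    · simp [hgk]
    · have hlt : a j < a k :=
        lt_of_le_of_ne (hjmin k (Finset.mem_filter.2 ⟨hks, hgk⟩)) fun h => hkj (ha h).symm
      rw [hbelow k _ hlt, mul_zero]
  have := DFunLike.congr_fun hsum (a j)
  simp only [Finsupp.finsetSum_apply, Finsupp.smul_apply, smul_eq_mul,
    Finsupp.coe_zero, Pi.zero_apply, hcoord] at this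
  exact mul_ne_zero hj.2 (hlead j) this

theorem eI_apply (p : ℕ × ℕ) (m : ℕ) : eI p m = if p.1 ≤ m ∧ m ≤ p.2 then 1 else 0 := by
  simp [eI, e, Finsupp.finsetSum_apply, Finsupp.single_apply, Finset.mem_Icc]

structure HasDistinctLeftEnds (B : Finset (ℕ × ℕ)) : Prop where
  fst_le_snd : ∀ p ∈ B, p.1 ≤ p.2
  injOn_fst : Set.InjOn Prod.fst (B : Set (ℕ × ℕ))

theorem HasDistinctLeftEnds.linearIndependent_eI {B : Finset (ℕ × ℕ)}
    (hB : HasDistinctLeftEnds B) :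
    LinearIndependent (ZMod 2) (fun p : {x : ℕ × ℕ // x ∈ B} => eI p.1) := by
  refine linearIndependent_of_injective_leading (fun p => p.1.1)
    (fun p q h => Subtype.ext (hB.injOn_fst p.2 q.2 h)) (fun p => ?_) (fun p m hm => ?_)
  · simp [eI_apply, hB.fst_le_snd p.1 p.2]
  · simp [eI_apply, Nat.not_le.2 hm]

theorem hasDistinctLeftEnds_image {s : Finset ℕ} {f g : ℕ → ℕ} (hf : Set.InjOn f s)
    (hfg : ∀ j ∈ s, f j ≤ g j) : HasDistinctLeftEnds (s.image fun j => (f j, g j)) := by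
  constructor
  · simp only [Finset.mem_image]
    rintro _ ⟨j, hj, rfl⟩
    exact hfg j hj
  · simp only [Finset.coe_image]
    rintro _ ⟨j, hj, rfl⟩ _ ⟨j', hj', rfl⟩ h
    rw [hf hj hj' h]

theorem IsPrim.hasDistinctLeftEnds {D : ℕ} {B : Finset (ℕ × ℕ)} (hB : IsPrim D B) :
    HasDistinctLeftEnds B := by
  rcases hB with rfl | ⟨-, k, -, hk, rfl⟩ | ⟨-, k, -, -, hk, rfl | rfl⟩
  · exact ⟨by simp, by simp⟩
  all_goals
    refine hasDistinctLeftEnds_image (fun j _ j' _ h => by simpa using h) fun j hj => ?_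
    rw [Finset.mem_Icc] at hj
    omega

theorem tint_fst (i : ℕ) (p : ℕ × ℕ) : (tint i p).1 = if i ≤ p.1 then p.1 + 2 else p.1 := by
  unfold tint
  split_ifs <;> rfl

theorem tint_fst_le_snd (i : ℕ) {p : ℕ × ℕ} (hp : p.1 ≤ p.2) : (tint i p).1 ≤ (tint i p).2 := by
  unfold tint
  split_ifs <;> omega

theorem tint_fst_ne (i : ℕ) (p : ℕ × ℕ) : (tint i p).1 ≠ i := by
  rw [tint_fst]
  split_ifs <;> omega

theorem fst_eq_of_tint_fst_eq {i : ℕ} {p q : ℕ × ℕ} (h : (tint i p).1 = (tint i q).1) :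
    p.1 = q.1 := by
  rw [tint_fst, tint_fst] at h
  split_ifs at h <;> omega

theorem HasDistinctLeftEnds.tmap {B : Finset (ℕ × ℕ)} (hB : HasDistinctLeftEnds B) (i : ℕ) :
    HasDistinctLeftEnds (tmap i B) := by
  constructor
  · simp only [_root_.tmap, Finset.mem_union, Finset.mem_image, Finset.mem_singleton]
    rintro _ (⟨p, hp, rfl⟩ | rfl)
    · exact tint_fst_le_snd i (hB.fst_le_snd p hp)
    · exact le_rfl
  · simp only [_root_.tmap, Finset.coe_union, Finset.coe_image, Finset.coe_singleton]
    rintro _ (⟨p, hp, rfl⟩ | rfl) _ (⟨q, hq, rfl⟩ | rfl) h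
    · rw [hB.injOn_fst hp hq (fst_eq_of_tint_fst_eq h)]
    · exact absurd h (tint_fst_ne i p)
    · exact absurd h.symm (tint_fst_ne i q)
    · rfl

theorem IsSS.hasDistinctLeftEnds {D : ℕ} {B : Finset (ℕ × ℕ)} (hB : IsSS D B) :
    HasDistinctLeftEnds B := by
  induction hB with
  | prim D B h => exact h.hasDistinctLeftEnds
  | one => exact ⟨by simp, by simp⟩
  | step D i B' _ _ _ ih => exact ih.tmap i

/-- for `B ∈ 𝕊_D`, the vectors `{e_I : I ∈ B}` are linearly independent. -/
theorem stmt1 (D : ℕ) (B : Finset (ℕ × ℕ)) (hB : IsSS D B) :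
    LinearIndependent (ZMod 2) (fun p : {x : ℕ × ℕ // x ∈ B} => eI p.1) :=
  hB.hasDistinctLeftEnds.linearIndependent_eI
end

section
/- Let B be a set of intervals in [1,D], each of odd length. Then B ∈ S_D if and only if B satisfies: (P₀) any two intervals in B are equal, non-touching, or strictly nested; and (P₁) whenever [a,b] ∈ B and c ∈ ℕ satisfies a < c < b with c ≢ a (mod 2), there exists [a₁,b₁] ∈ B with a < a₁ ≤ c ≤ b₁ < b. -/
open Finset

/-! Both directions follow the recursion `B = t_i(B')`. The map `ξ_i` preserves and reflects
(P₀), and the new singleton `[i,i]` is disjoint from or strictly inside every `ξ_i(I)`.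
For (P₁), the gap `i` of a stretched interval is covered by `[i,i]`, and its other gaps are
those of `I` moved past `i`, covered by the images of the intervals covering them in `B'`.

Conversely, under (P₁) a shortest interval `[a,b]` of `B` is a singleton `[i,i]`, since otherwise
its gap `a + 1` would be covered by a shorter one. By (P₀) every other interval either avoids
`[i-1,i+1]` or contains `i` in its interior, so it is `ξ_i` of an interval of `[1, D-2]`, and
`B = t_i(B')` with `B'` again satisfying (P₀) and (P₁). -/

def Compatible (p q : ℕ × ℕ) : Prop := p = q ∨ Nontouch p q ∨ Nested p q ∨ Nested q p

def IsOddInterval (p : ℕ × ℕ) : Prop := p.1 ≤ p.2 ∧ (p.2 - p.1) % 2 = 0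

def IsOddIntervalIn (D : ℕ) (p : ℕ × ℕ) : Prop := 1 ≤ p.1 ∧ p.2 ≤ D ∧ IsOddInterval p

def IsGap (p : ℕ × ℕ) (c : ℕ) : Prop := p.1 < c ∧ c < p.2 ∧ c % 2 ≠ p.1 % 2

def CoversGap (p q : ℕ × ℕ) (c : ℕ) : Prop :=
  p.1 < q.1 ∧ q.1 ≤ c ∧ c ≤ q.2 ∧ q.2 < p.2

def untint (i : ℕ) (p : ℕ × ℕ) : ℕ × ℕ :=
  if p.2 + 2 ≤ i then p else if i + 2 ≤ p.1 then (p.1 - 2, p.2 - 2) else (p.1, p.2 - 2)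

/- `shift i` embeds the points of `[1, D]` into `[1, D + 2] \ {i, i + 1}`. A gap `c ≠ i` of
`tint i p` need not lie in its range (the gap `i + 1` may come from `i - 1`), so the two
directions of the gap correspondence use `shift` and `unshift` respectively. -/
def shift (i c : ℕ) : ℕ := if c < i then c else c + 2

def unshift (i c : ℕ) : ℕ := if c < i then c else c - 2

section Interval

variable {i c : ℕ} {p q : ℕ × ℕ}

lemma Compatible.symm (h : Compatible p q) : Compatible q p := by
  rcases h with rfl | h | h | h
  exacts [Or.inl rfl, Or.inr (Or.inl h.symm), Or.inr (Or.inr (Or.inr h)),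
    Or.inr (Or.inr (Or.inl h))]

lemma tint_untint (hp : IsOddInterval p) (h : Nontouch p (i, i) ∨ Nested (i, i) p) :
    tint i (untint i p) = p := by
  obtain ⟨a, b⟩ := p
  simp only [IsOddInterval, Nontouch, Nested, tint, untint] at *
  split_ifs <;> simp only [Prod.mk.injEq, true_and] at * <;> omega

lemma compatible_tint_iff (hp : IsOddInterval p) (hq : IsOddInterval q) :
    Compatible (tint i p) (tint i q) ↔ Compatible p q := by
  obtain ⟨a, b⟩ := p
  obtain ⟨c, d⟩ := q
  simp only [IsOddInterval, Compatible, tint, Nontouch, Nested, Prod.ext_iff] at *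
  split_ifs <;> simp only at * <;> omega

lemma compatible_tint_self (hp : p.1 ≤ p.2) : Compatible (tint i p) (i, i) := by
  obtain ⟨a, b⟩ := p
  simp only [Compatible, tint, Nontouch, Nested, Prod.ext_iff] at *
  split_ifs <;> omega

lemma nontouch_or_nested_of_compatible (hp : p.1 ≤ p.2) (h : Compatible p (i, i))
    (hne : p ≠ (i, i)) : Nontouch p (i, i) ∨ Nested (i, i) p := by
  obtain ⟨a, b⟩ := p
  simp only [Compatible, Nontouch, Nested, ne_eq, Prod.ext_iff] at *
  omega

lemma isOddIntervalIn_tint {D : ℕ} (hp : IsOddIntervalIn D p) :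
    IsOddIntervalIn (D + 2) (tint i p) := by
  obtain ⟨a, b⟩ := p
  simp only [IsOddIntervalIn, IsOddInterval, tint] at *
  split_ifs <;> omega

lemma isOddIntervalIn_untint {D : ℕ} (hi : 1 ≤ i) (hiD : i ≤ D + 2)
    (hp : IsOddIntervalIn (D + 2) p) (h : Nontouch p (i, i) ∨ Nested (i, i) p) :
    IsOddIntervalIn D (untint i p) := by
  obtain ⟨a, b⟩ := p
  simp only [IsOddIntervalIn, IsOddInterval, Nontouch, Nested, untint] at *
  split_ifs <;> omega

lemma isGap_unshift (hp : IsOddInterval p) (hc : IsGap (tint i p) c) (hci : c ≠ i) :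
    IsGap p (unshift i c) := by
  obtain ⟨a, b⟩ := p
  simp only [IsOddInterval, IsGap, unshift, tint] at *
  split_ifs at * <;> omega

lemma coversGap_tint_of_unshift (hq : q.1 ≤ q.2) (hc : IsGap (tint i p) c) (hci : c ≠ i)
    (h : CoversGap p q (unshift i c)) : CoversGap (tint i p) (tint i q) c := by
  obtain ⟨a, b⟩ := p
  obtain ⟨u, v⟩ := q
  simp only [IsGap, CoversGap, unshift, tint] at *
  split_ifs at * <;> omega

lemma coversGap_tint_self (hc : IsGap (tint i p) i) : CoversGap (tint i p) (i, i) i := by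
  obtain ⟨a, b⟩ := p
  simp only [IsGap, CoversGap, tint] at *
  split_ifs at * <;> omega

lemma isGap_tint_shift (hp : IsOddInterval p) (hc : IsGap p c) :
    IsGap (tint i p) (shift i c) := by
  obtain ⟨a, b⟩ := p
  simp only [IsOddInterval, IsGap, shift, tint] at *
  split_ifs at * <;> omega

lemma coversGap_of_coversGap_tint (hp : IsOddInterval p) (hq : IsOddInterval q)
    (h : CoversGap (tint i p) (tint i q) (shift i c)) : CoversGap p q c := by
  obtain ⟨a, b⟩ := p
  obtain ⟨u, v⟩ := q
  simp only [IsOddInterval, CoversGap, shift, tint] at *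
  split_ifs at * <;> omega

end Interval

lemma not_isGap_singleton (i c : ℕ) : ¬IsGap (i, i) c := fun h => h.1.not_gt h.2.1

lemma shift_ne (i c : ℕ) : shift i c ≠ i := by
  unfold shift
  split_ifs <;> omega

def SatisfiesP0 (B : Finset (ℕ × ℕ)) : Prop := ∀ p ∈ B, ∀ q ∈ B, Compatible p q

def SatisfiesP1 (B : Finset (ℕ × ℕ)) : Prop :=
  ∀ p ∈ B, ∀ c, IsGap p c → ∃ q ∈ B, CoversGap p q c

section tmap

variable {i : ℕ} {B : Finset (ℕ × ℕ)}

lemma mem_tmap {p : ℕ × ℕ} :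
    p ∈ tmap i B ↔ (∃ q ∈ B, tint i q = p) ∨ p = (i, i) := by
  rw [tmap, mem_union, mem_image, mem_singleton]

lemma tint_mem_tmap {p : ℕ × ℕ} (hp : p ∈ B) : tint i p ∈ tmap i B :=
  mem_tmap.2 (Or.inl ⟨p, hp, rfl⟩)

lemma self_mem_tmap : (i, i) ∈ tmap i B := mem_tmap.2 (Or.inr rfl)

lemma satisfiesP0_tmap_iff (hB : ∀ p ∈ B, IsOddInterval p) :
    SatisfiesP0 (tmap i B) ↔ SatisfiesP0 B := by
  constructor
  · intro h p hp q hq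
    exact (compatible_tint_iff (hB p hp) (hB q hq)).1 (h _ (tint_mem_tmap hp) _ (tint_mem_tmap hq))
  · intro h _ hp' _ hq'
    rcases mem_tmap.1 hp' with ⟨p, hp, rfl⟩ | rfl <;>
      rcases mem_tmap.1 hq' with ⟨q, hq, rfl⟩ | rfl
    · exact (compatible_tint_iff (hB p hp) (hB q hq)).2 (h p hp q hq)
    · exact compatible_tint_self (hB p hp).1
    · exact (compatible_tint_self (hB q hq).1).symm
    · exact Or.inl rfl

lemma satisfiesP1_tmap_iff (hB : ∀ p ∈ B, IsOddInterval p) :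
    SatisfiesP1 (tmap i B) ↔ SatisfiesP1 B := by
  constructor
  · intro h p hp c hc
    obtain ⟨q, hq, hcov⟩ := h _ (tint_mem_tmap hp) (shift i c) (isGap_tint_shift (hB p hp) hc)
    rcases mem_tmap.1 hq with ⟨q, hq', rfl⟩ | rfl
    · exact ⟨q, hq', coversGap_of_coversGap_tint (hB p hp) (hB q hq') hcov⟩
    · exact absurd (le_antisymm hcov.2.2.1 hcov.2.1) (shift_ne i c)
  · intro h _ hp' c hc
    rcases mem_tmap.1 hp' with ⟨p, hp, rfl⟩ | rfl
    · by_cases hci : c = i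
      · subst hci
        exact ⟨(c, c), self_mem_tmap, coversGap_tint_self hc⟩
      · obtain ⟨q, hq, hcov⟩ := h p hp _ (isGap_unshift (hB p hp) hc hci)
        exact ⟨tint i q, tint_mem_tmap hq, coversGap_tint_of_unshift (hB q hq).1 hc hci hcov⟩
    · exact absurd hc (not_isGap_singleton i c)

lemma exists_singleton_mem (hB : ∀ p ∈ B, IsOddInterval p) (h1 : SatisfiesP1 B)
    (hne : B.Nonempty) : ∃ i, (i, i) ∈ B := by
  obtain ⟨⟨a, b⟩, hp, hmin⟩ := B.exists_min_image (fun p => p.2 - p.1) hne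
  refine ⟨a, ?_⟩
  obtain ⟨hab, hodd⟩ := hB _ hp
  obtain rfl : a = b := by
    by_contra hne
    obtain ⟨q, hq, hcov⟩ := h1 _ hp (a + 1) ⟨by omega, by omega, by omega⟩
    have := hmin q hq
    simp only [CoversGap] at hcov this
    omega
  exact hp

lemma exists_eq_tmap {D : ℕ} (hi : 1 ≤ i) (hiD : i ≤ D + 2)
    (hB : ∀ p ∈ B, IsOddIntervalIn (D + 2) p) (h0 : SatisfiesP0 B) (hii : (i, i) ∈ B) :
    ∃ B', (∀ p ∈ B', IsOddIntervalIn D p) ∧ B = tmap i B' := by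
  have hsep : ∀ p ∈ B.erase (i, i), Nontouch p (i, i) ∨ Nested (i, i) p := fun p hp =>
    have hpB := mem_of_mem_erase hp
    nontouch_or_nested_of_compatible (hB p hpB).2.2.1 (h0 p hpB _ hii) (ne_of_mem_erase hp)
  refine ⟨(B.erase (i, i)).image (untint i), ?_, ?_⟩
  · simp only [mem_image, forall_exists_index, and_imp]
    rintro _ p hp rfl
    exact isOddIntervalIn_untint hi hiD (hB p (mem_of_mem_erase hp)) (hsep p hp)
  · have hinv : Set.EqOn (tint i ∘ untint i) id (B.erase (i, i)) := fun p hp =>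
      tint_untint (hB p (mem_of_mem_erase hp)).2.2 (hsep p hp)
    rw [tmap, image_image, image_congr hinv, image_id, union_comm, ← insert_eq,
      insert_erase hii]

end tmap

namespace IsS

variable {D : ℕ} {B : Finset (ℕ × ℕ)}

lemma isOddIntervalIn (h : IsS D B) : ∀ p ∈ B, IsOddIntervalIn D p := by
  induction h with
  | empty => simp
  | one => simp [IsOddIntervalIn, IsOddInterval]
  | step D i B' h1 h2 _ ih =>
    intro p hp
    rcases mem_tmap.1 hp with ⟨q, hq, rfl⟩ | rfl
    · exact isOddIntervalIn_tint (ih q hq)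
    · exact ⟨h1, h2, le_rfl, by simp⟩

lemma satisfiesP0 (h : IsS D B) : SatisfiesP0 B := by
  induction h with
  | empty => simp [SatisfiesP0]
  | one => simp [SatisfiesP0, Compatible]
  | step D i B' _ _ h ih =>
    exact (satisfiesP0_tmap_iff fun p hp => (h.isOddIntervalIn p hp).2.2).2 ih

lemma satisfiesP1 (h : IsS D B) : SatisfiesP1 B := by
  induction h with
  | empty => simp [SatisfiesP1]
  | one =>
    intro p hp c hc
    rw [mem_singleton.1 hp] at hc
    exact absurd hc (not_isGap_singleton 1 c)
  | step D i B' _ _ h ih =>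
    exact (satisfiesP1_tmap_iff fun p hp => (h.isOddIntervalIn p hp).2.2).2 ih

end IsS

theorem isS_of_satisfiesP0_of_satisfiesP1 :
    ∀ {D : ℕ} {B : Finset (ℕ × ℕ)}, (∀ p ∈ B, IsOddIntervalIn D p) →
      SatisfiesP0 B → SatisfiesP1 B → IsS D B
  | 0, B, hB, _, _ => by
    rw [B.eq_empty_of_forall_notMem fun p hp => by
      have := hB p hp; simp only [IsOddIntervalIn, IsOddInterval] at this; omega]
    exact IsS.empty 0
  | 1, B, hB, _, _ => by
    rcases B.eq_empty_or_nonempty with rfl | hne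
    · exact IsS.empty 1
    obtain rfl : B = {(1, 1)} := eq_singleton_iff_nonempty_unique_mem.2 ⟨hne, fun p hp => by
      have := hB p hp; simp only [IsOddIntervalIn, IsOddInterval] at this; ext <;> omega⟩
    exact IsS.one
  | D + 2, B, hB, h0, h1 => by
    rcases B.eq_empty_or_nonempty with rfl | hne
    · exact IsS.empty _
    obtain ⟨i, hii⟩ := exists_singleton_mem (fun p hp => (hB p hp).2.2) h1 hne
    obtain ⟨hi, hiD, -⟩ := hB _ hii
    obtain ⟨B', hB', rfl⟩ := exists_eq_tmap hi hiD hB h0 hii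
    have hodd : ∀ p ∈ B', IsOddInterval p := fun p hp => (hB' p hp).2.2
    exact IsS.step D i B' hi hiD (isS_of_satisfiesP0_of_satisfiesP1 hB'
      ((satisfiesP0_tmap_iff hodd).1 h0) ((satisfiesP1_tmap_iff hodd).1 h1))


/-- a set of odd-length intervals in `[1,D]` is in `S_D` iff it satisfies
`(P₀)` and `(P₁)`. -/
theorem stmt6 (D : ℕ) (B : Finset (ℕ × ℕ))
    (hint : ∀ p ∈ B, 1 ≤ p.1 ∧ p.1 ≤ p.2 ∧ p.2 ≤ D)
    (hodd : ∀ p ∈ B, (p.2 - p.1) % 2 = 0) :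
    IsS D B ↔
      ((∀ p ∈ B, ∀ q ∈ B, p = q ∨ Nontouch p q ∨ Nested p q ∨ Nested q p) ∧
       (∀ p ∈ B, ∀ c : ℕ, p.1 < c → c < p.2 → c % 2 ≠ p.1 % 2 →
         ∃ q ∈ B, p.1 < q.1 ∧ q.1 ≤ c ∧ c ≤ q.2 ∧ q.2 < p.2)) := by
  have hB : ∀ p ∈ B, IsOddIntervalIn D p := fun p hp =>
    ⟨(hint p hp).1, (hint p hp).2.2, (hint p hp).2.1, hodd p hp⟩
  constructor
  · intro h
    exact ⟨h.satisfiesP0, fun p hp c h1 h2 h3 => h.satisfiesP1 p hp c ⟨h1, h2, h3⟩⟩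
  · rintro ⟨h0, h1⟩
    exact isS_of_satisfiesP0_of_satisfiesP1 hB h0 fun p hp c hc => h1 p hp c hc.1 hc.2.1 hc.2.2
end

section
/- Let D be odd. Then |𝒻_*(V_D)| = |𝒻_*(V_{D-1})|, where 𝒻_*(V_D) = {E ∈ 𝒻(V_D) : dim E = (D+1)/2} and 𝒻_*(V_{D-1}) = {E ∈ 𝒻(V_{D-1}) : dim E = (D−1)/2}. -/
open Finset

/-! For odd `D`, the map `F ↦ F ⊕ ⟨η_D⟩` with `η_D = e_1 + e_3 + ⋯ + e_D` is a bijection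
`𝒻_*(V_{D-1}) → 𝒻_*(V_D)`. The key identity is `T_i(η_D) = η_{D+2} + e_i` for `1 ≤ i ≤ D + 2`,
which gives `T_i(F ⊕ ⟨η_D⟩) ⊕ ⟨e_i⟩ = (T_i F ⊕ ⟨e_i⟩) ⊕ ⟨η_{D+2}⟩`; with it, induction along the
recursive definition of `𝒻` shows that the map lands in `𝒻_*(V_D)` and is onto (for `i = D + 2`,
`T_i` fixes `V_D` and `⟨e_{D+2}⟩` may be traded for `⟨η_{D+2}⟩`). The induction stays within
maximal dimension because each step `E' ↦ T_i E' ⊕ ⟨e_i⟩` raises the dimension by at most one.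
Injectivity: members of `𝒻(V_{D-1})` lie in `V_{D-1}`, which misses `η_D`, so `F` is recovered as
`(F ⊕ ⟨η_D⟩) ∩ V_{D-1}`. -/

open Module

namespace Submodule

variable {R M : Type*} [Ring R] [AddCommGroup M] [Module R M]

theorem sup_span_singleton_eq_of_sub_mem {p : Submodule R M} {u w : M} (h : u - w ∈ p) :
    p ⊔ span R {u} = p ⊔ span R {w} := by
  have key : ∀ {u w : M}, u - w ∈ p → p ⊔ span R {u} ≤ p ⊔ span R {w} := fun {u w} h ↦
    sup_le le_sup_left <| (span_singleton_le_iff_mem _ _).mpr <| by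
      simpa using add_mem (mem_sup_left h) (mem_sup_right (mem_span_singleton_self w))
  exact le_antisymm (key h) (key (by simpa using neg_mem h))

variable {K V : Type*} [DivisionRing K] [AddCommGroup V] [Module K V]

theorem finrank_sup_span_singleton_le (p : Submodule K V) [FiniteDimensional K p] (v : V) :
    finrank K ↥(p ⊔ span K {v}) ≤ finrank K p + 1 :=
  (finrank_add_le_finrank_add_finrank _ _).trans <|
    add_le_add_right (by simpa using finrank_span_le_card (R := K) ({v} : Set V)) _

theorem finrank_sup_span_singleton_of_notMem {p : Submodule K V} [FiniteDimensional K p] {v : V}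
    (hv : v ∉ p) : finrank K ↥(p ⊔ span K {v}) = finrank K p + 1 := by
  have hv₀ : v ≠ 0 := fun h ↦ hv (h ▸ p.zero_mem)
  have := finrank_sup_add_finrank_inf_eq p (span K {v})
  rwa [(disjoint_span_singleton_of_notMem hv).eq_bot, finrank_bot, add_zero,
    finrank_span_singleton hv₀] at this

theorem sup_span_singleton_inf_eq {p q : Submodule K V} {v : V} (hpq : p ≤ q) (hv : v ∉ q) :
    (p ⊔ span K {v}) ⊓ q = p := by
  rw [sup_inf_assoc_of_le _ hpq, inf_comm, (disjoint_span_singleton_of_notMem hv).eq_bot,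
    sup_bot_eq]

end Submodule

section

variable {D i : ℕ} {E F : Submodule (ZMod 2) Vec}

theorem e_mem_VD {k : ℕ} (h1 : 1 ≤ k) (h2 : k ≤ D) : e k ∈ VD D :=
  Submodule.subset_span ⟨k, ⟨h1, h2⟩, rfl⟩

theorem VD_eq_supported (D : ℕ) : VD D = Finsupp.supported (ZMod 2) (ZMod 2) (Set.Icc 1 D) :=
  (Finsupp.supported_eq_span_single _ _).symm

theorem apply_eq_zero_of_mem_VD {j : ℕ} {x : Vec} (hx : x ∈ VD D) (hj : D < j) : x j = 0 := by
  rw [VD_eq_supported, Finsupp.mem_supported'] at hx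
  exact hx j fun h ↦ by simp only [Set.mem_Icc] at h; omega

instance (D : ℕ) : FiniteDimensional (ZMod 2) (VD D) :=
  FiniteDimensional.span_of_finite _ ((Set.finite_Icc 1 D).image e)

theorem Tlin_e (i k : ℕ) : Tlin i (e k) = Tfun i k := by
  simp [Tlin, e]

theorem Tlin_eq_self_of_mem_VD {x : Vec} (hx : x ∈ VD D) (hi : D + 1 < i) : Tlin i x = x := by
  refine LinearMap.eqOn_span' (g := LinearMap.id) ?_ hx
  rintro _ ⟨k, hk, rfl⟩
  simp only [Set.mem_Icc] at hk
  simp only [Tlin_e, Tfun, LinearMap.id_apply, if_pos (show k + 1 < i by omega)]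

theorem map_Tlin_eq_self (hE : E ≤ VD D) (hi : D + 1 < i) : E.map (Tlin i) = E := by
  ext x
  constructor
  · rintro ⟨y, hy, rfl⟩
    rwa [Tlin_eq_self_of_mem_VD (hE hy) hi]
  · exact fun hx ↦ ⟨x, hx, Tlin_eq_self_of_mem_VD (hE hx) hi⟩

theorem map_Tlin_VD_le : (VD D).map (Tlin i) ≤ VD (D + 2) := by
  rw [VD, Submodule.map_span, Submodule.span_le]
  rintro _ ⟨_, ⟨k, ⟨hk1, hkD⟩, rfl⟩, rfl⟩
  rw [SetLike.mem_coe, Tlin_e, Tfun]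
  split_ifs
  · exact e_mem_VD hk1 (by omega)
  · exact add_mem (add_mem (e_mem_VD hk1 (by omega)) (e_mem_VD (by omega) (by omega)))
      (e_mem_VD (by omega) (by omega))
  · exact e_mem_VD (by omega) (by omega)

theorem IsF.le_VD (h : IsF D E) : E ≤ VD D := by
  induction h with
  | zero => exact bot_le
  | one => exact (Submodule.span_singleton_le_iff_mem _ _).mpr (e_mem_VD le_rfl le_rfl)
  | step D i E' hi1 hi2 _ ih =>
    exact sup_le ((Submodule.map_mono ih).trans map_Tlin_VD_le)
      ((Submodule.span_singleton_le_iff_mem _ _).mpr (e_mem_VD hi1 hi2))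

theorem IsF.finiteDimensional (h : IsF D E) : FiniteDimensional (ZMod 2) E :=
  Submodule.finiteDimensional_of_le h.le_VD

theorem IsF.succ (h : IsF D E) : IsF (D + 1) E := by
  induction h with
  | zero => exact IsF.zero _
  | one => simpa using IsF.step 0 1 ⊥ le_rfl (by omega) (IsF.zero 0)
  | step D i E' hi1 hi2 _ ih => exact IsF.step (D + 1) i E' hi1 (by omega) ih

theorem IsF.finrank_step_le (h : IsF D E) (i : ℕ) :
    finrank (ZMod 2) ↥(E.map (Tlin i) ⊔ (ZMod 2) ∙ e i) ≤ finrank (ZMod 2) E + 1 := by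
  have := h.finiteDimensional
  exact (Submodule.finrank_sup_span_singleton_le _ _).trans
    (Nat.add_le_add_right (Submodule.finrank_map_le _ _) 1)

theorem IsF.finrank_le (h : IsF D E) : finrank (ZMod 2) E ≤ (D + 1) / 2 := by
  induction h with
  | zero => simp
  | one => simpa using finrank_span_le_card (R := ZMod 2) ({e 1} : Set Vec)
  | step D i E' _ _ h _ => have := h.finrank_step_le i; omega

theorem IsF.finrank_eq_of_step (h : IsF D E)
    (hr : (D + 3) / 2 ≤ finrank (ZMod 2) ↥(E.map (Tlin i) ⊔ (ZMod 2) ∙ e i)) :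
    finrank (ZMod 2) E = (D + 1) / 2 := by
  have := h.finrank_step_le i
  have := h.finrank_le
  omega

theorem eta_one : eta 1 = e 1 := by
  simp [eta, Finset.filter_singleton]

theorem eta_add_two (hD : Odd D) : eta (D + 2) = eta D + e (D + 2) := by
  rw [Nat.odd_iff] at hD
  rw [eta, eta, show D + 2 = D + 1 + 1 from rfl, ← insert_Icc_right_eq_Icc_add_one (by omega),
    filter_insert, if_pos (by omega), ← insert_Icc_right_eq_Icc_add_one (by omega),
    filter_insert, if_neg (by omega), sum_insert (by simp), add_comm]

theorem eta_mem_VD (D : ℕ) : eta D ∈ VD D :=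
  sum_mem fun j hj ↦ by simp only [mem_filter, mem_Icc] at hj; exact e_mem_VD hj.1.1 hj.1.2

theorem eta_apply_self (hD : Odd D) : eta D D = 1 := by
  rw [Nat.odd_iff] at hD
  rw [eta, Finset.sum_apply', sum_eq_single D]
  · simp [e]
  · intro j _ hj
    simp [e, hj]
  · intro h
    exact (h (mem_filter.mpr ⟨mem_Icc.mpr ⟨by omega, le_rfl⟩, hD⟩)).elim

theorem eta_notMem_VD (hD : Odd D) : eta D ∉ VD (D - 1) := fun h ↦ by
  simpa [eta_apply_self hD] using apply_eq_zero_of_mem_VD (j := D) h (by have := hD.pos; omega)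

theorem Tlin_eta (hD : Odd D) (hi1 : 1 ≤ i) (hi2 : i ≤ D + 2) :
    Tlin i (eta D) = eta (D + 2) + e i := by
  obtain ⟨m, rfl⟩ := hD
  induction m generalizing i with
  | zero =>
    rw [show 2 * 0 + 1 = 1 from rfl, eta_add_two odd_one, eta_one] at *
    interval_cases i <;> simp only [Tlin_e, Tfun] <;> norm_num
    · rw [add_right_comm, ZModModule.add_self, zero_add]
    · rw [add_right_comm]
    · rw [add_assoc, ZModModule.add_self, add_zero]
  | succ m ih =>
    have hD : Odd (2 * m + 1) := odd_two_mul_add_one m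
    have hD' : Odd (2 * m + 1 + 2) := hD.add_even (by decide)
    rw [show 2 * (m + 1) + 1 = 2 * m + 1 + 2 by ring] at hi2 ⊢
    obtain hi | rfl | rfl :
        i ≤ 2 * m + 1 + 2 ∨ i = 2 * m + 1 + 2 + 1 ∨ i = 2 * m + 1 + 2 + 2 := by omega
    · rw [eta_add_two hD, map_add, ih hi1 hi, Tlin_e, Tfun, if_neg (by omega), if_neg (by omega),
        eta_add_two hD', add_right_comm]
    · rw [eta_add_two hD, map_add, Tlin_eq_self_of_mem_VD (eta_mem_VD _) (by omega), Tlin_e, Tfun,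
        if_neg (by omega), if_pos rfl, eta_add_two hD', eta_add_two hD]
      abel
    · rw [Tlin_eq_self_of_mem_VD (eta_mem_VD _) (by omega), eta_add_two hD', add_assoc (eta _),
        ZModModule.add_self, add_zero]

theorem map_Tlin_sup_eta (hD : Odd D) (hi1 : 1 ≤ i) (hi2 : i ≤ D + 2) :
    (F ⊔ (ZMod 2) ∙ eta D).map (Tlin i) ⊔ (ZMod 2) ∙ e i
      = (F.map (Tlin i) ⊔ (ZMod 2) ∙ e i) ⊔ (ZMod 2) ∙ eta (D + 2) := by
  rw [Submodule.map_sup, Submodule.map_span, Set.image_singleton, Tlin_eta hD hi1 hi2,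
    sup_right_comm]
  exact Submodule.sup_span_singleton_eq_of_sub_mem
    (by simpa using Submodule.mem_sup_right (Submodule.mem_span_singleton_self (e i)))

theorem IsF.sup_eta (h : IsF D F) (hD : Even D) (hr : finrank (ZMod 2) F = D / 2) :
    IsF (D + 1) (F ⊔ (ZMod 2) ∙ eta (D + 1)) := by
  induction h with
  | zero D =>
    obtain rfl : D = 0 := by rw [Nat.even_iff] at hD; simp only [finrank_bot] at hr; omega
    simpa [eta_one] using IsF.one
  | one => exact absurd hD (by decide)
  | step D i E' hi1 hi2 h ih =>
    have hD' : Even D := by simpa [parity_simps] using hD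
    have hE' := h.finrank_eq_of_step (i := i) (by rw [Nat.even_iff] at hD; omega)
    have := IsF.step (D + 1) i _ hi1 (by omega) (ih hD' (by rw [hE', Nat.even_iff] at *; omega))
    rwa [map_Tlin_sup_eta (hD'.add_odd odd_one) hi1 (by omega)] at this

theorem IsF.exists_eq_sup_eta (h : IsF D E) (hD : Odd D) (hr : finrank (ZMod 2) E = (D + 1) / 2) :
    ∃ F, IsF (D - 1) F ∧ E = F ⊔ (ZMod 2) ∙ eta D := by
  induction h with
  | zero D => have := hD.pos; simp only [finrank_bot] at hr; omega
  | one => exact ⟨⊥, IsF.zero 0, by rw [eta_one, bot_sup_eq]⟩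
  | step D i E' hi1 hi2 h ih =>
    have hD' : Odd D := by simpa [parity_simps] using hD
    obtain ⟨F, hF, rfl⟩ := ih hD' (h.finrank_eq_of_step (i := i) (by omega))
    obtain hi | rfl : i ≤ D + 1 ∨ i = D + 2 := by omega
    · refine ⟨F.map (Tlin i) ⊔ (ZMod 2) ∙ e i, ?_, map_Tlin_sup_eta hD' hi1 (by omega)⟩
      have := IsF.step (D - 1) i F hi1 (by omega) hF
      rwa [show D - 1 + 2 = D + 2 - 1 by have := hD'.pos; omega] at this
    · refine ⟨F ⊔ (ZMod 2) ∙ eta D, h.succ, ?_⟩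
      rw [map_Tlin_eq_self h.le_VD (by omega), eta_add_two hD']
      exact Submodule.sup_span_singleton_eq_of_sub_mem
        (by simpa using Submodule.mem_sup_right (Submodule.mem_span_singleton_self (eta D)))

theorem IsF.finrank_sup_eta (hD : Odd D) (hF : IsF (D - 1) F) :
    finrank (ZMod 2) ↥(F ⊔ (ZMod 2) ∙ eta D) = finrank (ZMod 2) F + 1 :=
  have := hF.finiteDimensional
  Submodule.finrank_sup_span_singleton_of_notMem fun h ↦ eta_notMem_VD hD (hF.le_VD h)

theorem image_sup_eta (hD : Odd D) :
    (· ⊔ (ZMod 2) ∙ eta D) '' {F | IsF (D - 1) F ∧ finrank (ZMod 2) F = (D - 1) / 2}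
      = {E | IsF D E ∧ finrank (ZMod 2) E = (D + 1) / 2} := by
  ext E
  constructor
  · rintro ⟨F, ⟨hF, hr⟩, rfl⟩
    have := hF.sup_eta (Nat.Odd.sub_odd hD odd_one) hr
    rw [Nat.sub_add_cancel hD.pos] at this
    exact ⟨this, by rw [hF.finrank_sup_eta hD]; have := hD.pos; omega⟩
  · rintro ⟨hE, hr⟩
    obtain ⟨F, hF, rfl⟩ := hE.exists_eq_sup_eta hD hr
    exact ⟨F, ⟨hF, by rw [hF.finrank_sup_eta hD] at hr; omega⟩, rfl⟩

theorem injOn_sup_eta (hD : Odd D) : Set.InjOn (· ⊔ (ZMod 2) ∙ eta D) {F | IsF (D - 1) F} := by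
  intro F hF F' hF' h
  dsimp only at h
  rw [← Submodule.sup_span_singleton_inf_eq hF.le_VD (eta_notMem_VD hD), h,
    Submodule.sup_span_singleton_inf_eq hF'.le_VD (eta_notMem_VD hD)]

end

/-- for odd `D`, `|𝒻_*(V_D)| = |𝒻_*(V_{D-1})|`. -/
theorem stmt16 (D : ℕ) (hD : Odd D) :
    {E : Submodule (ZMod 2) Vec |
        IsF D E ∧ Module.finrank (ZMod 2) E = (D + 1) / 2}.ncard
      = {E : Submodule (ZMod 2) Vec |
          IsF (D - 1) E ∧ Module.finrank (ZMod 2) E = (D - 1) / 2}.ncard := by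
  rw [← image_sup_eta hD]
  exact ((injOn_sup_eta hD).mono fun _ hF ↦ hF.1).ncard_image
end
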